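/- For every integer k ≥ 1, setting ρ_k = c_k^{-2(k+1)/k}, one has 0 < ρ_k < 2. (For k ≥ 2 this follows from c_k > (1/√2) k^{1/(2(k+1))} (k/(k-1))^{(k-1)/(2(k+1))}; for k = 1 from c_1 > 1.) -/

import Mathlib

/-!
Put `α = 1/(k+1)`, so that `k α = 1 - α`. Since `t/(1-t²) ≤ 1/(2(1-t))`, comparison with
`∫₀¹ (1-t)^(-α) = 1/(1-α)` gives `A ≤ 2^(-α)/(1-α)`; since `(t(1-t²)^k)^(-α) > t^(-α)`, one gets
`B > 1/(1-α)`. Hence `c² = B/(2A) > 2^(α-1) = 2^(-k/(k+1))`, and `ρ = (c²)^(-(k+1)/k) < 2`.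
The singularities of the integrands at the endpoints are all of the integrable type `t^(-γ)`
or `(1-t)^(-γ)` with `γ < 1`.
-/

open Real MeasureTheory Set

lemma setIntegral_Ioo_pos {a b : ℝ} (hab : a < b) {f : ℝ → ℝ} (hf : IntegrableOn f (Ioo a b))
    (hpos : ∀ t ∈ Ioo a b, 0 < f t) : 0 < ∫ t in Ioo a b, f t := by
  rw [setIntegral_pos_iff_support_of_nonneg_ae ?_ hf]
  · rw [inter_eq_right.mpr fun t ht => Function.mem_support.mpr (hpos t ht).ne', Real.volume_Ioo]
    simpa using hab
  · filter_upwards [ae_restrict_mem measurableSet_Ioo] with t ht using (hpos t ht).le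

lemma integrableOn_Ioo_rpow_neg {α : ℝ} (hα : α < 1) :
    IntegrableOn (fun t : ℝ => t ^ (-α)) (Ioo 0 1) :=
  (intervalIntegral.integrableOn_Ioo_rpow_iff one_pos).mpr (by linarith)

lemma integrableOn_Ioo_one_sub_rpow_neg {α : ℝ} (hα : α < 1) :
    IntegrableOn (fun t : ℝ => (1 - t) ^ (-α)) (Ioo 0 1) := by
  have h := (intervalIntegral.intervalIntegrable_rpow' (a := 0) (b := 1)
    (show -1 < -α by linarith)).comp_sub_left 1
  rw [sub_self, sub_zero] at h
  exact (intervalIntegrable_iff_integrableOn_Ioo_of_le zero_le_one).mp h.symm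

lemma integral_Ioo_rpow_neg {α : ℝ} (hα : α < 1) :
    ∫ t in Ioo (0:ℝ) 1, t ^ (-α) = (1 - α)⁻¹ := by
  rw [← integral_Ioc_eq_integral_Ioo, ← intervalIntegral.integral_of_le zero_le_one,
    integral_rpow (Or.inl (by linarith)), one_rpow,
    zero_rpow (show (0:ℝ) < -α + 1 by linarith).ne']
  ring

lemma integral_Ioo_one_sub_rpow_neg {α : ℝ} (hα : α < 1) :
    ∫ t in Ioo (0:ℝ) 1, (1 - t) ^ (-α) = (1 - α)⁻¹ := by
  rw [← integral_Ioc_eq_integral_Ioo, ← intervalIntegral.integral_of_le zero_le_one,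
    intervalIntegral.integral_comp_sub_left (fun t => t ^ (-α)), sub_self, sub_zero,
    intervalIntegral.integral_of_le zero_le_one, integral_Ioc_eq_integral_Ioo,
    integral_Ioo_rpow_neg hα]

lemma rpow_neg_le_two_rpow {s γ : ℝ} (hγ : 0 ≤ γ) (hs : 1 / 2 ≤ s) : s ^ (-γ) ≤ 2 ^ γ := by
  calc s ^ (-γ) ≤ (1 / 2) ^ (-γ) := rpow_le_rpow_of_nonpos (by norm_num) hs (by linarith)
    _ = 2 ^ γ := by rw [one_div, inv_rpow zero_le_two, rpow_neg zero_le_two, inv_inv]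

/-- Near each endpoint only one of the two singular factors is large. -/
lemma rpow_neg_mul_one_sub_rpow_neg_le {α β t : ℝ} (hα : 0 ≤ α) (hβ : 0 ≤ β)
    (ht : t ∈ Ioo (0:ℝ) 1) :
    t ^ (-α) * (1 - t) ^ (-β) ≤ 2 ^ β * t ^ (-α) + 2 ^ α * (1 - t) ^ (-β) := by
  have ht0 : 0 ≤ t ^ (-α) := rpow_nonneg ht.1.le _
  have ht1 : 0 ≤ (1 - t) ^ (-β) := rpow_nonneg (sub_pos.2 ht.2).le _
  rcases le_total t (1 / 2) with h | h
  · have := rpow_neg_le_two_rpow hβ (show 1 / 2 ≤ 1 - t by linarith)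
    nlinarith [rpow_nonneg zero_le_two α]
  · have := rpow_neg_le_two_rpow hα h
    nlinarith [rpow_nonneg zero_le_two β]

lemma integrableOn_Ioo_rpow_neg_mul_one_sub_sq_rpow_neg {α β : ℝ} (hα0 : 0 ≤ α) (hα : α < 1)
    (hβ0 : 0 ≤ β) (hβ : β < 1) :
    IntegrableOn (fun t : ℝ => t ^ (-α) * (1 - t ^ 2) ^ (-β)) (Ioo 0 1) := by
  refine Integrable.mono' (((integrableOn_Ioo_rpow_neg hα).const_mul (2 ^ β)).add
    ((integrableOn_Ioo_one_sub_rpow_neg hβ).const_mul (2 ^ α))) (by measurability) ?_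
  filter_upwards [ae_restrict_mem measurableSet_Ioo] with t ht
  have h1 : 0 < 1 - t := sub_pos.2 ht.2
  have h2 : 0 < 1 - t ^ 2 := by nlinarith [ht.1]
  rw [norm_of_nonneg (mul_nonneg (rpow_nonneg ht.1.le _) (rpow_nonneg h2.le _))]
  calc t ^ (-α) * (1 - t ^ 2) ^ (-β) ≤ t ^ (-α) * (1 - t) ^ (-β) :=
        mul_le_mul_of_nonneg_left (rpow_le_rpow_of_nonpos h1 (by nlinarith [ht.1]) (by linarith))
          (rpow_nonneg ht.1.le _)
    _ ≤ _ := rpow_neg_mul_one_sub_rpow_neg_le hα0 hβ0 ht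

lemma div_one_sub_sq_rpow_le {α t : ℝ} (hα : 0 ≤ α) (ht : t ∈ Ioo (0:ℝ) 1) :
    (t / (1 - t ^ 2)) ^ α ≤ 2 ^ (-α) * (1 - t) ^ (-α) := by
  have h1 : 0 < 1 - t := sub_pos.2 ht.2
  have h2 : 0 < 1 - t ^ 2 := by nlinarith [ht.1]
  calc (t / (1 - t ^ 2)) ^ α ≤ (1 / (2 * (1 - t))) ^ α := by
        refine rpow_le_rpow (div_nonneg ht.1.le h2.le) ?_ hα
        rw [div_le_div_iff₀ h2 (by positivity)]
        nlinarith
    _ = 2 ^ (-α) * (1 - t) ^ (-α) := by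
        rw [one_div, inv_rpow (by positivity), mul_rpow zero_le_two h1.le, mul_inv,
          rpow_neg zero_le_two, rpow_neg h1.le]

lemma integrableOn_Ioo_div_one_sub_sq_rpow {α : ℝ} (hα0 : 0 ≤ α) (hα : α < 1) :
    IntegrableOn (fun t : ℝ => (t / (1 - t ^ 2)) ^ α) (Ioo 0 1) := by
  refine Integrable.mono' ((integrableOn_Ioo_one_sub_rpow_neg hα).const_mul (2 ^ (-α)))
    (by fun_prop : Measurable _).aestronglyMeasurable ?_
  filter_upwards [ae_restrict_mem measurableSet_Ioo] with t ht
  rw [norm_of_nonneg (rpow_nonneg (div_nonneg ht.1.le (by nlinarith [ht.1, ht.2])) _)]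
  exact div_one_sub_sq_rpow_le hα0 ht

lemma integral_div_one_sub_sq_rpow_pos {α : ℝ} (hα0 : 0 ≤ α) (hα : α < 1) :
    0 < ∫ t in Ioo (0:ℝ) 1, (t / (1 - t ^ 2)) ^ α :=
  setIntegral_Ioo_pos one_pos (integrableOn_Ioo_div_one_sub_sq_rpow hα0 hα) fun _ ht =>
    rpow_pos_of_pos (div_pos ht.1 (by nlinarith [ht.1, ht.2])) _

lemma integral_div_one_sub_sq_rpow_le {α : ℝ} (hα0 : 0 ≤ α) (hα : α < 1) :
    ∫ t in Ioo (0:ℝ) 1, (t / (1 - t ^ 2)) ^ α ≤ 2 ^ (-α) * (1 - α)⁻¹ := by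
  rw [← integral_Ioo_one_sub_rpow_neg hα, ← integral_const_mul]
  exact setIntegral_mono_on (integrableOn_Ioo_div_one_sub_sq_rpow hα0 hα)
    ((integrableOn_Ioo_one_sub_rpow_neg hα).const_mul _) measurableSet_Ioo
    fun _ ht => div_one_sub_sq_rpow_le hα0 ht

lemma inv_one_sub_lt_integral_rpow_neg_mul_one_sub_sq_rpow_neg {α β : ℝ} (hα0 : 0 ≤ α)
    (hα : α < 1) (hβ0 : 0 < β) (hβ : β < 1) :
    (1 - α)⁻¹ < ∫ t in Ioo (0:ℝ) 1, t ^ (-α) * (1 - t ^ 2) ^ (-β) := by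
  rw [← integral_Ioo_rpow_neg hα, ← sub_pos, ← integral_sub
    (integrableOn_Ioo_rpow_neg_mul_one_sub_sq_rpow_neg hα0 hα hβ0.le hβ)
    (integrableOn_Ioo_rpow_neg hα)]
  refine setIntegral_Ioo_pos one_pos ((integrableOn_Ioo_rpow_neg_mul_one_sub_sq_rpow_neg
    hα0 hα hβ0.le hβ).sub (integrableOn_Ioo_rpow_neg hα)) fun t ht => ?_
  have h1 : 1 < (1 - t ^ 2) ^ (-β) :=
    one_lt_rpow_of_pos_of_lt_one_of_neg (by nlinarith [ht.1, ht.2]) (by nlinarith [ht.1])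
      (by linarith)
  nlinarith [rpow_pos_of_pos ht.1 (-α)]

lemma integral_mul_one_sub_sq_pow_rpow_neg (k : ℕ) (α : ℝ) :
    ∫ t in Ioo (0:ℝ) 1, (t * (1 - t ^ 2) ^ k) ^ (-α) =
      ∫ t in Ioo (0:ℝ) 1, t ^ (-α) * (1 - t ^ 2) ^ (-(k * α)) := by
  refine setIntegral_congr_fun measurableSet_Ioo fun t ht => ?_
  have h : 0 < 1 - t ^ 2 := by nlinarith [ht.1, ht.2]
  rw [mul_rpow ht.1.le (by positivity), ← rpow_natCast, ← rpow_mul h.le, mul_neg]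

lemma sqrt_rpow_lt_two {k r : ℝ} (hk : 0 < k) (hr : 2 ^ (-(k / (k + 1))) < r) :
    √r ^ (-(2 * (k + 1)) / k) < 2 := by
  have hr0 : 0 < r := (rpow_pos_of_pos two_pos _).trans hr
  have he : -(2 * (k + 1)) / k = 2 * -((k + 1) / k) := by ring
  calc √r ^ (-(2 * (k + 1)) / k) = r ^ (-((k + 1) / k)) := by
        rw [he, rpow_mul (sqrt_nonneg r), rpow_two, sq_sqrt hr0.le]
    _ < (2 ^ (-(k / (k + 1)))) ^ (-((k + 1) / k)) :=
        rpow_lt_rpow_of_neg (rpow_pos_of_pos two_pos _) hr (by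
          rw [neg_lt_zero]; positivity)
    _ = 2 := by
        rw [← rpow_mul zero_le_two, show -(k / (k + 1)) * -((k + 1) / k) = 1 by field_simp,
          rpow_one]

theorem stmt5 (k : ℕ) (hk : 1 ≤ k) (A B c ρ : ℝ)
    (hA : A = ∫ t in Set.Ioo (0:ℝ) 1, (t / (1 - t^2)) ^ ((1:ℝ)/((k:ℝ)+1)))
    (hB : B = ∫ t in Set.Ioo (0:ℝ) 1, (t * (1 - t^2)^k) ^ (-(1:ℝ)/((k:ℝ)+1)))
    (hc : c = Real.sqrt (B / (2 * A)))
    (hρ : ρ = c ^ (-(2*((k:ℝ)+1))/(k:ℝ))) :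
    0 < ρ ∧ ρ < 2 := by
  have hk0 : (0:ℝ) < k := by exact_mod_cast hk
  set α : ℝ := 1 / ((k:ℝ) + 1) with hα
  have hα0 : 0 < α := by positivity
  have hα1 : α < 1 := by rw [hα, div_lt_one (by positivity)]; linarith
  have hkα : (k:ℝ) * α = 1 - α := by rw [hα]; field_simp; ring
  have hA_pos : 0 < A := hA ▸ integral_div_one_sub_sq_rpow_pos hα0.le hα1
  have hA_le : A ≤ 2 ^ (-α) * (1 - α)⁻¹ := hA ▸ integral_div_one_sub_sq_rpow_le hα0.le hα1
  have hB_gt : (1 - α)⁻¹ < B := by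
    rw [hB, neg_div, integral_mul_one_sub_sq_pow_rpow_neg, hkα]
    exact inv_one_sub_lt_integral_rpow_neg_mul_one_sub_sq_rpow_neg hα0.le hα1 (by linarith)
      (by linarith)
  have hAB : 2 ^ α * A < B :=
    calc 2 ^ α * A ≤ 2 ^ α * (2 ^ (-α) * (1 - α)⁻¹) := by gcongr
      _ = (1 - α)⁻¹ := by rw [← mul_assoc, ← rpow_add two_pos, add_neg_cancel, rpow_zero, one_mul]
      _ < B := hB_gt
  have hr : 2 ^ (-((k:ℝ) / (k + 1))) < B / (2 * A) := by
    rw [show -((k:ℝ) / (k + 1)) = α - 1 by rw [hα]; field_simp; ring, rpow_sub_one two_ne_zero,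
      div_lt_div_iff₀ two_pos (by positivity)]
    nlinarith
  subst hc hρ
  exact ⟨rpow_pos_of_pos (sqrt_pos.2 ((rpow_pos_of_pos two_pos _).trans hr)) _,
    sqrt_rpow_lt_two hk0 hr⟩
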